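/- arXiv:1202.6035 — 4 statements merged into one kernel-verified Lean document; each statement's English description precedes it below -/
import Mathlib

section
/- Let g : {0,1}^n → ℝ≥0 be log-supermodular. Then for any integer k ≥ 1 and any vectors x^1, …, x^k ∈ {0,1}^n, one has ∏_{i=1}^k g(x^i) ≤ ∏_{i=1}^k g(z^i(x^1,…,x^k)). -/
open scoped NNReal
open Finset

def zvec {k n : ℕ} (x : Fin k → Fin n → Bool) (i : Fin k) : Fin n → Bool :=
  fun j => decide ((i : ℕ) + 1 ≤ (Finset.univ.filter (fun a : Fin k => x a j = true)).card)

section aux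
variable {k n : ℕ}

/-- number of `true`s in a boolean vector -/
def rowCard {n : ℕ} (a : Fin n → Bool) : ℕ := (univ.filter (fun j => a j = true)).card

lemma bool_ind (a b : Bool) :
    (if (a || b) = true then 1 else 0) + (if (a && b) = true then 1 else 0)
      = ((if a = true then 1 else 0) + (if b = true then 1 else 0) : ℕ) := by
  cases a <;> cases b <;> simp

lemma rowCard_sup_add_inf (a b : Fin n → Bool) :
    rowCard (a ⊔ b) + rowCard (a ⊓ b) = rowCard a + rowCard b := by
  simp only [rowCard, card_filter]
  rw [← Finset.sum_add_distrib, ← Finset.sum_add_distrib]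
  refine Finset.sum_congr rfl fun j _ => ?_
  simp only [Pi.sup_apply, Pi.inf_apply, Bool.max_eq_or, Bool.min_eq_and]
  exact bool_ind (a j) (b j)

lemma rowCard_inf_lt (a b : Fin n → Bool) (h : ¬ b ≤ a) :
    rowCard (a ⊓ b) < rowCard b := by
  obtain ⟨j, hj⟩ : ∃ j, b j = true ∧ a j = false := by
    by_contra hc
    push_neg at hc
    exact h fun j => by
      have := hc j
      cases hb : b j
      · simp
      · have := this hb; simp_all
  refine Finset.card_lt_card ⟨?_, ?_⟩
  · intro j' hj'
    simp only [mem_filter, mem_univ, true_and, Pi.inf_apply, Bool.min_eq_and,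
      Bool.and_eq_true] at hj' ⊢
    exact hj'.2
  · intro hsub
    have := hsub (by simp [hj.1] : j ∈ univ.filter (fun j => b j = true))
    simp [Pi.inf_apply, hj.1, hj.2] at this

lemma sum_split (i i' : Fin k) (hii : i ≠ i') (f : Fin k → ℕ) :
    ∑ c, f c = f i + f i' + ∑ c ∈ (univ.erase i).erase i', f c := by
  rw [← Finset.add_sum_erase _ f (mem_univ i),
      ← Finset.add_sum_erase _ f (Finset.mem_erase.mpr ⟨hii.symm, mem_univ i'⟩)]
  ring

lemma prod_split (i i' : Fin k) (hii : i ≠ i') (f : Fin k → ℝ≥0) :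
    ∏ c, f c = f i * f i' * ∏ c ∈ (univ.erase i).erase i', f c := by
  rw [← Finset.mul_prod_erase _ f (mem_univ i),
      ← Finset.mul_prod_erase _ f (Finset.mem_erase.mpr ⟨hii.symm, mem_univ i'⟩)]
  ring

end aux

lemma arith_key (i i' s t p q : ℕ) (hii : i < i') (hst : s + t = p + q) (htq : t < q) :
    i * s + i' * t < i * p + i' * q := by nlinarith

lemma key {n k : ℕ} (g : (Fin n → Bool) → ℝ≥0)
    (hg : ∀ x y : Fin n → Bool, g x * g y ≤ g (x ⊓ y) * g (x ⊔ y)) :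
    ∀ (N : ℕ) (x : Fin k → Fin n → Bool), (∑ c : Fin k, (c : ℕ) * rowCard (x c)) ≤ N →
      ∏ c : Fin k, g (x c) ≤ ∏ c : Fin k, g (zvec x c) := by
  intro N
  induction N using Nat.strong_induction_on with
  | _ N ih =>
  intro x hx
  by_cases h : ∃ i i' : Fin k, i < i' ∧ ¬ x i' ≤ x i
  · obtain ⟨i, i', hlt, hnle⟩ := h
    have hne : i ≠ i' := ne_of_lt hlt
    set a := x i with ha
    set b := x i' with hb
    set x' := Function.update (Function.update x i (a ⊔ b)) i' (a ⊓ b) with hxdef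
    have hxi : x' i = a ⊔ b := by
      rw [hxdef, Function.update_of_ne hne, Function.update_self]
    have hxi' : x' i' = a ⊓ b := by
      rw [hxdef, Function.update_self]
    have hother : ∀ c, c ≠ i → c ≠ i' → x' c = x c := by
      intro c hci hci'
      rw [hxdef, Function.update_of_ne hci', Function.update_of_ne hci]
    have hrestmem : ∀ c ∈ (univ.erase i).erase i', x' c = x c := by
      intro c hc
      simp only [mem_erase, mem_univ] at hc
      exact hother c hc.2.1 hc.1
    -- column counts are preserved
    have hcol : ∀ j, (univ.filter fun c => x' c j = true).card
        = (univ.filter fun c => x c j = true).card := by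
      intro j
      simp only [card_filter]
      rw [sum_split i i' hne, sum_split i i' hne]
      have hrest : ∑ c ∈ (univ.erase i).erase i', (if x' c j = true then 1 else 0)
          = ∑ c ∈ (univ.erase i).erase i', (if x c j = true then 1 else 0) :=
        Finset.sum_congr rfl fun c hc => by rw [hrestmem c hc]
      rw [hrest, hxi, hxi', Pi.sup_apply, Pi.inf_apply, Bool.max_eq_or, Bool.min_eq_and,
        bool_ind]
    have hz : zvec x' = zvec x := by
      funext c j
      simp only [zvec, hcol j]
    -- the potential strictly decreases
    have hΦ : (∑ c : Fin k, (c : ℕ) * rowCard (x' c)) < ∑ c : Fin k, (c : ℕ) * rowCard (x c) := by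
      rw [sum_split i i' hne, sum_split i i' hne]
      have hrest : ∑ c ∈ (univ.erase i).erase i', ((c : ℕ) * rowCard (x' c))
          = ∑ c ∈ (univ.erase i).erase i', ((c : ℕ) * rowCard (x c)) :=
        Finset.sum_congr rfl fun c hc => by rw [hrestmem c hc]
      rw [hrest, hxi, hxi']
      exact Nat.add_lt_add_right
        (arith_key _ _ _ _ _ _ hlt (rowCard_sup_add_inf a b) (rowCard_inf_lt a b hnle)) _
    calc ∏ c : Fin k, g (x c)
        = g a * g b * ∏ c ∈ (univ.erase i).erase i', g (x c) :=
          prod_split i i' hne (fun c => g (x c))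
      _ ≤ g (a ⊓ b) * g (a ⊔ b) * ∏ c ∈ (univ.erase i).erase i', g (x c) :=
          mul_le_mul_left (hg a b) _
      _ = ∏ c : Fin k, g (x' c) := by
          rw [prod_split i i' hne (fun c => g (x' c)), hxi, hxi']
          have : ∏ c ∈ (univ.erase i).erase i', g (x' c)
              = ∏ c ∈ (univ.erase i).erase i', g (x c) :=
            Finset.prod_congr rfl fun c hc => by rw [hrestmem c hc]
          rw [this]; ring
      _ ≤ ∏ c : Fin k, g (zvec x' c) := ih _ (lt_of_lt_of_le hΦ hx) x' le_rfl
      _ = ∏ c : Fin k, g (zvec x c) := by rw [hz]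
  · push_neg at h
    have hxz : ∀ c, x c = zvec x c := by
      intro c
      funext j
      show x c j = decide ((c : ℕ) + 1 ≤ (univ.filter (fun a : Fin k => x a j = true)).card)
      by_cases hc : x c j = true
      · rw [hc]
        symm
        rw [decide_eq_true_iff]
        have hsub : Finset.Iic c ⊆ univ.filter (fun a : Fin k => x a j = true) := by
          intro d hd
          simp only [mem_filter, mem_univ, true_and]
          rcases eq_or_lt_of_le (Finset.mem_Iic.mp hd) with he | hlt2
          · rw [he]; exact hc
          · have hle := h d c hlt2 j
            rw [hc] at hle
            revert hle; cases x d j <;> simp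
        calc (c : ℕ) + 1 = (Finset.Iic c).card := (Fin.card_Iic c).symm
          _ ≤ _ := Finset.card_le_card hsub
      · have hcf : x c j = false := by simpa using hc
        rw [hcf]
        symm
        rw [decide_eq_false_iff_not]
        intro hle
        have hsub : univ.filter (fun a : Fin k => x a j = true) ⊆ Finset.Iio c := by
          intro d hd
          simp only [mem_filter, mem_univ, true_and] at hd
          rw [Finset.mem_Iio]
          by_contra hdc
          push_neg at hdc
          rcases eq_or_lt_of_le hdc with he | hlt2
          · rw [← he] at hd; rw [hd] at hcf; exact Bool.noConfusion hcf
          · have hle2 := h c d hlt2 j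
            rw [hd, hcf] at hle2
            revert hle2; simp
        have := Finset.card_le_card hsub
        rw [Fin.card_Iio] at this
        omega
    exact le_of_eq (Finset.prod_congr rfl fun c _ => by rw [hxz c])

/-- If `g : {0,1}ⁿ → ℝ≥0` is log-supermodular, then for any `k ≥ 1` and any
`x¹, …, xᵏ ∈ {0,1}ⁿ`, `∏ᵢ g(xⁱ) ≤ ∏ᵢ g(zⁱ(x¹,…,xᵏ))`. -/
theorem prod_le_prod_zvec_of_logSupermodular {n k : ℕ} (hk : 1 ≤ k)
    (g : (Fin n → Bool) → ℝ≥0)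
    (hg : ∀ x y : Fin n → Bool, g x * g y ≤ g (x ⊓ y) * g (x ⊔ y))
    (x : Fin k → Fin n → Bool) :
    ∏ i : Fin k, g (x i) ≤ ∏ i : Fin k, g (zvec x i) :=
  key g hg _ x le_rfl
end

section
/- If f : {0,1}^{n+m} → ℝ≥0 is log-supermodular, then the marginal g : {0,1}^n → ℝ≥0 defined by g(y) = ∑_{s ∈ {0,1}^m} f(y, s) is log-supermodular. -/
open scoped NNReal

/-! Summing out `s` is an instance of the Ahlswede–Daykin four functions theorem on `{0,1}^m`,
applied to the slices `f (y, ·)`, `f (y', ·)`, `f (y ⊓ y', ·)`, `f (y ⊔ y', ·)`; its hypothesis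
is log-supermodularity of `f`, because `Fin.append` commutes with `⊓` and `⊔`. -/

namespace Fin

variable {α : Type*} {n m : ℕ}

lemma append_inf_append [Min α] (a c : Fin n → α) (b d : Fin m → α) :
    append a b ⊓ append c d = append (a ⊓ c) (b ⊓ d) := by
  funext i
  refine addCases (fun j => ?_) (fun j => ?_) i <;> simp

lemma append_sup_append [Max α] (a c : Fin n → α) (b d : Fin m → α) :
    append a b ⊔ append c d = append (a ⊔ c) (b ⊔ d) := by
  funext i
  refine addCases (fun j => ?_) (fun j => ?_) i <;> simp

end Fin

lemma marginal_mul_marginal_le_of_logSupermodular {α β R : Type*} [Min α] [Max α]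
    [DistribLattice β] [Fintype β] [CommSemiring R] [LinearOrder R] [IsStrictOrderedRing R]
    [ExistsAddOfLE R]
    (F : α → β → R) (hF₀ : ∀ a b, 0 ≤ F a b)
    (hF : ∀ a a' b b', F a b * F a' b' ≤ F (a ⊓ a') (b ⊓ b') * F (a ⊔ a') (b ⊔ b'))
    (a a' : α) :
    (∑ b, F a b) * ∑ b, F a' b ≤ (∑ b, F (a ⊓ a') b) * ∑ b, F (a ⊔ a') b :=
  four_functions_theorem_univ (F a) (F a') (F (a ⊓ a')) (F (a ⊔ a'))
    (hF₀ a) (hF₀ a') (hF₀ _) (hF₀ _) (hF a a')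

/-- If `f : {0,1}^{n+m} → ℝ≥0` is log-supermodular, then the marginal
`g(y) = ∑_{s ∈ {0,1}^m} f(y, s)` is log-supermodular on `{0,1}ⁿ`. -/
theorem marginal_logSupermodular {n m : ℕ} (f : (Fin (n + m) → Bool) → ℝ≥0)
    (hf : ∀ x y : Fin (n + m) → Bool, f x * f y ≤ f (x ⊓ y) * f (x ⊔ y))
    (g : (Fin n → Bool) → ℝ≥0)
    (hg : ∀ y : Fin n → Bool, g y = ∑ s : Fin m → Bool, f (Fin.append y s)) :
    ∀ y y' : Fin n → Bool, g y * g y' ≤ g (y ⊓ y') * g (y ⊔ y') := by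
  intro y y'
  simp only [hg]
  refine marginal_mul_marginal_le_of_logSupermodular (fun y s => f (Fin.append y s))
    (fun _ _ => zero_le) (fun y y' s s' => ?_) y y'
  simpa only [Fin.append_inf_append, Fin.append_sup_append] using
    hf (Fin.append y s) (Fin.append y' s')
end

section
/- Let f_1,…,f_k : {0,1} → ℝ≥0 and let g : {0,1}^k → ℝ≥0 be log-supermodular. If g(x^1,…,x^k) ≤ ∏_{i=1}^k f_i(z^i(x^1,…,x^k)) for all x^1,…,x^k ∈ {0,1}, then ∑_{x^1,…,x^k ∈ {0,1}} g(x^1,…,x^k) ≤ ∏_{i=1}^k (f_i(0) + f_i(1)). -/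
open scoped NNReal

/-- `zscal x i` is the `(i+1)`-st largest (1-indexed) among the scalars `x 0, …, x (k-1)`;
i.e. it is `true` iff at least `i+1` of these values are `true`. -/
def zscal {k : ℕ} (x : Fin k → Bool) (i : Fin k) : Bool :=
  decide ((i : ℕ) + 1 ≤ (Finset.univ.filter (fun a : Fin k => x a = true)).card)

/-!
Tensor-power trick. `(∑ g) ^ N` is a sum over `N`-tuples `p` of rows, and log-supermodularity
lets us replace `∏ⱼ g (p j)` by the product over the sorted tuple, whose row `j` is the set of
columns containing more than `j` ones: sweeping one row through the others, keeping meets and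
carrying the join, never decreases the product. The sorted rows form a chain, so a single
permutation `σ` of the columns sorts all of them at once and turns `zⁱ` into evaluation at `σ i`.
As `∏ⱼ fᵢ (· j)` on a column only depends on its number of ones, each tuple contributes at most
`∑_σ ∏ⱼ ∏ᵢ fᵢ (p j (σ i))`, and summing over all tuples gives
`(∑ g) ^ N ≤ k! * (∏ᵢ (fᵢ 0 + fᵢ 1)) ^ N`. Letting `N → ∞` removes the factor `k!`.
-/

open Finset
open scoped List

section Sweep

variable {α M : Type*} [Lattice α] [CommMonoid M] [PartialOrder M] [IsOrderedMonoid M]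

def IsLogSupermodular (g : α → M) : Prop :=
  ∀ x y, g x * g y ≤ g (x ⊓ y) * g (x ⊔ y)

def infSweep (s : α) : List α → List α
  | [] => []
  | y :: l => (s ⊓ y) :: infSweep (s ⊔ y) l

@[simp] lemma length_infSweep (s : α) (l : List α) : (infSweep s l).length = l.length := by
  induction l generalizing s with
  | nil => rfl
  | cons y l ih => simp [infSweep, ih]

lemma IsLogSupermodular.mul_prod_le_infSweep {g : α → M} (hg : IsLogSupermodular g)
    (s : α) (l : List α) :
    g s * (l.map g).prod ≤ g (l.foldl (· ⊔ ·) s) * ((infSweep s l).map g).prod := by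
  induction l generalizing s with
  | nil => simp [infSweep]
  | cons y l ih =>
    simp only [List.map_cons, List.prod_cons, List.foldl_cons, infSweep]
    calc g s * (g y * (l.map g).prod) = g s * g y * (l.map g).prod := (mul_assoc _ _ _).symm
      _ ≤ g (s ⊓ y) * g (s ⊔ y) * (l.map g).prod := mul_le_mul_left (hg s y) _
      _ = g (s ⊓ y) * (g (s ⊔ y) * (l.map g).prod) := mul_assoc _ _ _
      _ ≤ g (s ⊓ y) * (g (l.foldl (· ⊔ ·) (s ⊔ y)) * ((infSweep (s ⊔ y) l).map g).prod) :=
          mul_le_mul_right (ih (s ⊔ y)) _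
      _ = _ := mul_left_comm _ _ _

lemma perm_map_foldl_sup_cons_infSweep {β : Type*} [LinearOrder β] (φ : LatticeHom α β)
    (s : α) (l : List α) :
    (s :: l).map φ ~ (l.foldl (· ⊔ ·) s :: infSweep s l).map φ := by
  induction l generalizing s with
  | nil => simp [infSweep]
  | cons y l ih =>
    have hpair : [φ s, φ y] ~ [φ (s ⊓ y), φ (s ⊔ y)] := by
      rw [map_inf, map_sup]
      rcases le_total (φ s) (φ y) with h | h
      · simp [h]
      · simpa [h] using List.Perm.swap (φ y) (φ s) []
    calc (s :: y :: l).map φ ~ φ (s ⊓ y) :: φ (s ⊔ y) :: l.map φ :=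
          hpair.append_right (l.map φ)
      _ ~ φ (s ⊓ y) :: φ (l.foldl (· ⊔ ·) (s ⊔ y)) :: (infSweep (s ⊔ y) l).map φ :=
          (ih (s ⊔ y)).cons _
      _ ~ _ := List.Perm.swap _ _ _

end Sweep

section SortedRows

variable {ι M : Type*} [CommMonoid M] [PartialOrder M] [IsOrderedMonoid M]

/-- Row `j` of the sorted form of `l`. -/
def level (l : List (ι → Bool)) (j : ℕ) : ι → Bool :=
  fun c => decide (j < l.countP (· c))

lemma foldl_sup_apply (s : ι → Bool) (l : List (ι → Bool)) (c : ι) :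
    l.foldl (· ⊔ ·) s c = decide (0 < (s :: l).countP (· c)) := by
  induction l generalizing s with
  | nil => cases h : s c <;> simp [h]
  | cons y l ih =>
    rw [List.foldl_cons, ih]
    cases hs : s c <;> cases hy : y c <;> simp [hs, hy]

lemma level_cons_zero (x : ι → Bool) (l : List (ι → Bool)) :
    level (x :: l) 0 = l.foldl (· ⊔ ·) x :=
  funext fun c => (foldl_sup_apply x l c).symm

lemma level_infSweep (x : ι → Bool) (l : List (ι → Bool)) (j : ℕ) :
    level (infSweep x l) j = level (x :: l) (j + 1) := by
  funext c
  have hcount : (l.foldl (· ⊔ ·) x :: infSweep x l).countP (· c) = (x :: l).countP (· c) := by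
    have := (perm_map_foldl_sup_cons_infSweep (Pi.evalLatticeHom c) x l).countP_eq id
    rw [List.countP_map, List.countP_map] at this
    exact this.symm
  rw [List.countP_cons, foldl_sup_apply] at hcount
  simp only [level, decide_eq_decide]
  split_ifs at hcount with h <;> simp only [decide_eq_true_eq] at h <;> omega

theorem IsLogSupermodular.prod_map_le_prod_level {g : (ι → Bool) → M}
    (hg : IsLogSupermodular g) (l : List (ι → Bool)) :
    (l.map g).prod ≤ ∏ j ∈ range l.length, g (level l j) := by
  obtain ⟨n, hn⟩ : ∃ n, l.length = n := ⟨_, rfl⟩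
  induction n generalizing l with
  | zero => simp [List.length_eq_zero_iff.mp hn]
  | succ n ih =>
    obtain ⟨x, l, rfl⟩ := List.exists_cons_of_length_eq_add_one hn
    have hl : l.length = n := by simpa using hn
    have hlevels : ((infSweep x l).map g).prod ≤ ∏ j ∈ range n, g (level (x :: l) (j + 1)) := by
      simpa [level_infSweep, hl] using ih (infSweep x l) (by simpa using hl)
    calc ((x :: l).map g).prod = g x * (l.map g).prod := List.prod_cons
      _ ≤ g (l.foldl (· ⊔ ·) x) * ((infSweep x l).map g).prod := hg.mul_prod_le_infSweep x l
      _ ≤ g (level (x :: l) 0) * ∏ j ∈ range n, g (level (x :: l) (j + 1)) := by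
        rw [level_cons_zero]
        exact mul_le_mul_right hlevels _
      _ = ∏ j ∈ range (x :: l).length, g (level (x :: l) j) := by
        rw [hn, prod_range_succ', mul_comm]

lemma List.countP_ofFn {α : Type*} {N : ℕ} (p : Fin N → α) (q : α → Bool) :
    (List.ofFn p).countP q = #{i | q (p i)} := by
  induction N with
  | zero => simp
  | succ N ih =>
    rw [List.ofFn_succ, List.countP_cons, ih, card_filter, card_filter, Fin.sum_univ_succ,
      add_comm]

def sortedRows {N : ℕ} (p : Fin N → ι → Bool) (j : Fin N) : ι → Bool :=
  fun c => decide ((j : ℕ) < #{j' | p j' c})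

lemma level_ofFn {N : ℕ} (p : Fin N → ι → Bool) (j : Fin N) :
    level (List.ofFn p) j = sortedRows p j := by
  funext c
  rw [level, sortedRows, List.countP_ofFn]

theorem IsLogSupermodular.prod_le_prod_sortedRows {g : (ι → Bool) → M}
    (hg : IsLogSupermodular g) {N : ℕ} (p : Fin N → ι → Bool) :
    ∏ j, g (p j) ≤ ∏ j, g (sortedRows p j) := by
  have := hg.prod_map_le_prod_level (List.ofFn p)
  rw [List.map_ofFn, List.prod_ofFn, List.length_ofFn, ← Fin.prod_univ_eq_prod_range] at this
  simpa only [level_ofFn, Function.comp_apply] using this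

lemma prod_apply_bool_eq_of_card_filter_eq {κ : Type*} [Fintype κ] {M : Type*} [CommMonoid M]
    (F : Bool → M) {b b' : κ → Bool} (h : #{j | b j} = #{j | b' j}) :
    ∏ j, F (b j) = ∏ j, F (b' j) := by
  have key : ∀ b : κ → Bool, ∏ j, F (b j) = F true ^ #{j | b j} * F false ^ #{j | ¬ b j} := by
    intro b
    calc ∏ j, F (b j) = ∏ j, if b j then F true else F false :=
          prod_congr rfl fun j _ => by cases b j <;> rfl
      _ = _ := by rw [prod_ite, prod_const, prod_const]
  have h' : #{j | ¬ b j} = #{j | ¬ b' j} := by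
    have := card_filter_add_card_filter_not (s := univ) (p := fun j => b j = true)
    have := card_filter_add_card_filter_not (s := univ) (p := fun j => b' j = true)
    omega
  rw [key, key, h, h']

lemma prod_prod_sortedRows {κ : Type*} [Fintype κ] {M : Type*} [CommMonoid M] {N : ℕ}
    (F : κ → Bool → M) (e : κ → ι) (p : Fin N → ι → Bool) :
    ∏ j, ∏ i, F i (sortedRows p j (e i)) = ∏ j, ∏ i, F i (p j (e i)) := by
  rw [prod_comm, prod_comm (f := fun j i => F i (p j (e i)))]
  refine prod_congr rfl fun i _ => prod_apply_bool_eq_of_card_filter_eq (F i) ?_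
  simp only [sortedRows, decide_eq_true_eq]
  rw [Fin.card_filter_val_lt, min_eq_right]
  simpa using card_le_univ (univ.filter fun j' => p j' (e i) = true)

end SortedRows

section Zscal

variable {k : ℕ}

lemma zscal_comp_perm (x : Fin k → Bool) (σ : Equiv.Perm (Fin k)) : zscal (x ∘ σ) = zscal x := by
  funext i
  rw [zscal, zscal, card_equiv σ (t := {a | x a = true}) (fun a => by simp)]

lemma zscal_eq_self_of_antitone {x : Fin k → Bool} (hx : Antitone x) : zscal x = x := by
  funext i
  cases hxi : x i
  · have hcard : #{a | x a = true} ≤ i :=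
      calc #{a | x a = true} ≤ #(Iio i) := card_le_card fun a ha => by
            rw [mem_Iio]
            by_contra! hia
            have := Bool.eq_false_of_le_false (hxi ▸ hx hia)
            simp_all
        _ = i := Fin.card_Iio i
    simp only [zscal, decide_eq_false_iff_not]
    omega
  · have hcard : (i : ℕ) + 1 ≤ #{a | x a = true} :=
      calc (i : ℕ) + 1 = #(Iic i) := (Fin.card_Iic i).symm
        _ ≤ #{a | x a = true} := card_le_card fun a ha => by
            simpa using Bool.eq_true_of_true_le (hxi ▸ hx (mem_Iic.mp ha))
    simpa [zscal] using hcard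

lemma exists_perm_antitone_comp {α : Type*} [LinearOrder α] (ν : Fin k → α) :
    ∃ σ : Equiv.Perm (Fin k), Antitone (ν ∘ σ) :=
  ⟨Tuple.sort (OrderDual.toDual ∘ ν), monotone_toDual_comp_iff.mp (Tuple.monotone_sort _)⟩

lemma exists_perm_zscal_sortedRows {N : ℕ} (p : Fin N → Fin k → Bool) :
    ∃ σ : Equiv.Perm (Fin k), ∀ j, zscal (sortedRows p j) = sortedRows p j ∘ σ := by
  obtain ⟨σ, hσ⟩ := exists_perm_antitone_comp fun c => #{j | p j c}
  refine ⟨σ, fun j => ?_⟩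
  rw [← zscal_comp_perm _ σ, zscal_eq_self_of_antitone]
  intro a b hab
  exact Bool.le_iff_imp.mpr fun h => decide_eq_true ((of_decide_eq_true h).trans_le (hσ hab))

variable (f : Fin k → Bool → ℝ≥0)

lemma prod_le_sum_perm {g : (Fin k → Bool) → ℝ≥0} (hg : IsLogSupermodular g)
    (hgf : ∀ x, g x ≤ ∏ i, f i (zscal x i)) {N : ℕ} (p : Fin N → Fin k → Bool) :
    ∏ j, g (p j) ≤ ∑ σ : Equiv.Perm (Fin k), ∏ j, ∏ i, f i (p j (σ i)) := by
  obtain ⟨σ, hσ⟩ := exists_perm_zscal_sortedRows p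
  calc ∏ j, g (p j) ≤ ∏ j, g (sortedRows p j) := hg.prod_le_prod_sortedRows p
    _ ≤ ∏ j, ∏ i, f i (zscal (sortedRows p j) i) := prod_le_prod' fun j _ => hgf _
    _ = ∏ j, ∏ i, f i (sortedRows p j (σ i)) := by simp_rw [hσ, Function.comp_apply]
    _ = ∏ j, ∏ i, f i (p j (σ i)) := prod_prod_sortedRows f σ p
    _ ≤ ∑ τ : Equiv.Perm (Fin k), ∏ j, ∏ i, f i (p j (τ i)) :=
        single_le_sum (f := fun τ : Equiv.Perm (Fin k) => ∏ j, ∏ i, f i (p j (τ i)))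
          (fun _ _ => zero_le) (mem_univ σ)

lemma sum_prod_prod_comp_perm (σ : Equiv.Perm (Fin k)) (N : ℕ) :
    ∑ p : Fin N → Fin k → Bool, ∏ j, ∏ i, f i (p j (σ i)) = (∏ i, (f i false + f i true)) ^ N := by
  rw [← Fintype.sum_pow (fun y : Fin k → Bool => ∏ i, f i (y (σ i)))]
  congr 1
  rw [← Equiv.sum_comp (Equiv.arrowCongr σ (Equiv.refl Bool))]
  simp only [Equiv.arrowCongr_apply, Equiv.coe_refl, Function.comp_apply, Equiv.symm_apply_apply,
    id]
  rw [← Fintype.prod_sum]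
  exact prod_congr rfl fun i _ => by rw [Fintype.sum_bool, add_comm]

end Zscal

lemma NNReal.le_of_forall_pow_le_mul_pow {S R C : ℝ≥0} (h : ∀ N : ℕ, S ^ N ≤ C * R ^ N) :
    S ≤ R := by
  by_contra! hRS
  rcases eq_zero_or_pos R with rfl | hR
  · simpa [hRS.ne'] using h 1
  · obtain ⟨N, hN⟩ := pow_unbounded_of_one_lt C ((one_lt_div hR).mpr hRS)
    rw [div_pow, lt_div_iff₀ (pow_pos hR N)] at hN
    exact hN.not_ge (h N)

/-- Lemma 5 of the paper (the case `n = 1`): if `g : {0,1}ᵏ → ℝ≥0` is log-supermodular and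
`g(x¹,…,xᵏ) ≤ ∏ᵢ fᵢ(zⁱ(x¹,…,xᵏ))` for all `x¹,…,xᵏ ∈ {0,1}`, then
`∑_{x¹,…,xᵏ} g(x¹,…,xᵏ) ≤ ∏ᵢ (fᵢ(0) + fᵢ(1))`. -/
theorem sum_le_prod_of_logSupermodular_base {k : ℕ}
    (f : Fin k → Bool → ℝ≥0) (g : (Fin k → Bool) → ℝ≥0)
    (hg : ∀ x y : Fin k → Bool, g x * g y ≤ g (x ⊓ y) * g (x ⊔ y))
    (hgf : ∀ x : Fin k → Bool, g x ≤ ∏ i : Fin k, f i (zscal x i)) :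
    ∑ x : Fin k → Bool, g x ≤ ∏ i : Fin k, (f i false + f i true) := by
  refine NNReal.le_of_forall_pow_le_mul_pow (C := Fintype.card (Equiv.Perm (Fin k))) fun N => ?_
  calc (∑ x, g x) ^ N = ∑ p : Fin N → Fin k → Bool, ∏ j, g (p j) := Fintype.sum_pow g N
    _ ≤ ∑ p : Fin N → Fin k → Bool, ∑ σ : Equiv.Perm (Fin k), ∏ j, ∏ i, f i (p j (σ i)) :=
        sum_le_sum fun p _ => prod_le_sum_perm f hg hgf p
    _ = ∑ _σ : Equiv.Perm (Fin k), (∏ i, (f i false + f i true)) ^ N := by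
        rw [sum_comm]
        simp_rw [sum_prod_prod_comp_perm]
    _ = _ := by rw [sum_const, card_univ, nsmul_eq_mul]
end

section
/- Let f^G : {0,1}^n → ℝ≥0 admit a factorization f^G(x) = ∏_{i∈V} φ_i(x_i) · ∏_{α∈𝒜} ψ_α(x_α) over G = (V, 𝒜) in which every ψ_α is log-supermodular, and let f^H be the function associated to a permutation-encoded k-cover H of G. Then max_{x^1,…,x^k ∈ {0,1}^n} f^H(x^1,…,x^k) ≤ ( max_{x ∈ {0,1}^n} f^G(x) )^k. -/
open scoped NNReal

namespace CoverMaxAux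

open Finset

variable {k : ℕ} {ι : Type*} [Fintype ι]

/-- column count of trues -/
def cnt (u : Fin k → ι → Bool) (i : ι) : ℕ := ∑ a : Fin k, (if u a i then 1 else 0)

/-- per-column sorted rearrangement -/
def srt (u : Fin k → ι → Bool) : Fin k → ι → Bool := fun a i => decide ((a : ℕ) < cnt u i)

/-- potential for the bubble-sort induction -/
def pot (u : Fin k → ι → Bool) : ℕ := ∑ i : ι, ∑ a : Fin k, (a : ℕ) * (if u a i then 1 else 0)

lemma count_lt {c : ℕ} (h : c ≤ k) : (∑ a : Fin k, if (a : ℕ) < c then 1 else 0) = c := by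
  rw [Fin.sum_univ_eq_sum_range (fun j => if j < c then 1 else 0) k, Finset.sum_boole]
  have : (Finset.range k).filter (fun j => j < c) = Finset.range c := by
    ext j; simp [Finset.mem_range]; omega
  simp [this]

lemma cnt_le (u : Fin k → ι → Bool) (i : ι) : cnt u i ≤ k := by
  calc cnt u i ≤ ∑ _a : Fin k, 1 := Finset.sum_le_sum (fun a _ => by split <;> omega)
  _ = k := by simp

lemma srt_eq_of_sorted (u : Fin k → ι → Bool)
    (hs : ∀ i (a b : Fin k), a < b → u b i = true → u a i = true) : u = srt u := by
  funext a i
  have hclaim : ∀ b : Fin k, u b i = true → u a i = false → (b : ℕ) < (a : ℕ) := by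
    intro b hb ha
    by_contra hle
    push_neg at hle
    rcases lt_or_eq_of_le (Fin.le_def.mpr hle) with h | h
    · exact absurd (hs i a b h hb) (by simp [ha])
    · rw [h] at ha; simp [ha] at hb
  cases h : u a i with
  | false =>
    have hle : cnt u i ≤ (a : ℕ) := by
      calc cnt u i ≤ ∑ b : Fin k, (if (b : ℕ) < (a : ℕ) then 1 else 0) := by
            refine Finset.sum_le_sum fun b _ => ?_
            cases hb : u b i with
            | false => simp
            | true => simp [hclaim b hb h]
      _ = (a : ℕ) := count_lt (le_of_lt a.isLt)
    simp [srt, Nat.not_lt.mpr hle]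
  | true =>
    have hge : (a : ℕ) + 1 ≤ cnt u i := by
      calc (a:ℕ) + 1 = ∑ b : Fin k, (if (b : ℕ) < (a : ℕ) + 1 then 1 else 0) :=
            (count_lt a.isLt).symm
      _ ≤ cnt u i := by
            refine Finset.sum_le_sum fun b _ => ?_
            split
            · rename_i hb
              have hb' : b ≤ a := Fin.le_def.mpr (by omega)
              rcases lt_or_eq_of_le hb' with hlt | heq
              · simp [hs i b a hlt h]
              · simp [heq, h]
            · omega
    simp [srt, Nat.lt_of_succ_le hge]

@[to_additive]
lemma prod_pair_rest {M : Type*} [CommMonoid M] (g : Fin k → M) {a b : Fin k} (hab : a ≠ b) :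
    ∏ c, g c = g a * g b * ∏ c ∈ (Finset.univ.erase b).erase a, g c := by
  rw [← Finset.mul_prod_erase Finset.univ g (Finset.mem_univ b),
    ← Finset.mul_prod_erase (Finset.univ.erase b) g (Finset.mem_erase.mpr ⟨hab, Finset.mem_univ a⟩),
    ← mul_assoc, mul_comm (g b) (g a)]


/-- one comparator step -/
def cmp (u : Fin k → ι → Bool) (a b : Fin k) : Fin k → ι → Bool :=
  Function.update (Function.update u a (u a ⊔ u b)) b (u a ⊓ u b)

lemma cmp_a (u : Fin k → ι → Bool) {a b : Fin k} (hab : a ≠ b) : cmp u a b a = u a ⊔ u b := by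
  rw [cmp, Function.update_of_ne hab, Function.update_self]

lemma cmp_b (u : Fin k → ι → Bool) (a b : Fin k) : cmp u a b b = u a ⊓ u b := by
  rw [cmp, Function.update_self]

lemma cmp_other (u : Fin k → ι → Bool) {a b c : Fin k} (hca : c ≠ a) (hcb : c ≠ b) :
    cmp u a b c = u c := by
  rw [cmp, Function.update_of_ne hcb, Function.update_of_ne hca]

lemma cnt_cmp (u : Fin k → ι → Bool) {a b : Fin k} (hab : a ≠ b) (i : ι) :
    cnt (cmp u a b) i = cnt u i := by
  unfold cnt
  rw [sum_pair_rest (fun c => if cmp u a b c i then 1 else 0) hab,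
      sum_pair_rest (fun c => if u c i then 1 else 0) hab]
  have hrest : ∑ c ∈ (Finset.univ.erase b).erase a, (if cmp u a b c i then 1 else 0)
      = ∑ c ∈ (Finset.univ.erase b).erase a, (if u c i then 1 else 0) := by
    refine Finset.sum_congr rfl fun c hc => ?_
    simp only [Finset.mem_erase] at hc
    rw [cmp_other u hc.1 hc.2.1]
  rw [hrest, cmp_a u hab, cmp_b u]
  have h1 : (u a ⊔ u b) i = (u a i || u b i) := by simp [Pi.sup_apply]
  have h2 : (u a ⊓ u b) i = (u a i && u b i) := by simp [Pi.inf_apply]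
  rw [h1, h2]
  cases hx : u a i <;> cases hy : u b i <;> simp

lemma srt_cmp (u : Fin k → ι → Bool) {a b : Fin k} (hab : a ≠ b) :
    srt (cmp u a b) = srt u := by
  funext c i; rw [srt, srt, cnt_cmp u hab]

lemma pot_cmp (u : Fin k → ι → Bool) {a b : Fin k} (hab : a < b) {i : ι}
    (ha : u a i = false) (hb : u b i = true) :
    pot (cmp u a b) < pot u := by
  unfold pot
  have key : ∀ j : ι,
      (∑ c : Fin k, (c : ℕ) * (if cmp u a b c j then 1 else 0))
        ≤ ∑ c : Fin k, (c : ℕ) * (if u c j then 1 else 0) := by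
    intro j
    rw [sum_pair_rest (fun c => (c : ℕ) * (if cmp u a b c j then 1 else 0)) hab.ne,
        sum_pair_rest (fun c => (c : ℕ) * (if u c j then 1 else 0)) hab.ne]
    have hrest : ∑ c ∈ (Finset.univ.erase b).erase a, (c : ℕ) * (if cmp u a b c j then 1 else 0)
        = ∑ c ∈ (Finset.univ.erase b).erase a, (c : ℕ) * (if u c j then 1 else 0) := by
      refine Finset.sum_congr rfl fun c hc => ?_
      simp only [Finset.mem_erase] at hc
      rw [cmp_other u hc.1 hc.2.1]
    rw [hrest, cmp_a u hab.ne, cmp_b u]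
    have h1 : (u a ⊔ u b) j = (u a j || u b j) := by simp [Pi.sup_apply]
    have h2 : (u a ⊓ u b) j = (u a j && u b j) := by simp [Pi.inf_apply]
    rw [h1, h2]
    have hab' : (a : ℕ) ≤ (b : ℕ) := le_of_lt hab
    cases hx : u a j <;> cases hy : u b j <;> simp <;> omega
  have strict :
      (∑ c : Fin k, (c : ℕ) * (if cmp u a b c i then 1 else 0))
        < ∑ c : Fin k, (c : ℕ) * (if u c i then 1 else 0) := by
    rw [sum_pair_rest (fun c => (c : ℕ) * (if cmp u a b c i then 1 else 0)) hab.ne,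
        sum_pair_rest (fun c => (c : ℕ) * (if u c i then 1 else 0)) hab.ne]
    have hrest : ∑ c ∈ (Finset.univ.erase b).erase a, (c : ℕ) * (if cmp u a b c i then 1 else 0)
        = ∑ c ∈ (Finset.univ.erase b).erase a, (c : ℕ) * (if u c i then 1 else 0) := by
      refine Finset.sum_congr rfl fun c hc => ?_
      simp only [Finset.mem_erase] at hc
      rw [cmp_other u hc.1 hc.2.1]
    rw [hrest, cmp_a u hab.ne, cmp_b u]
    have h1 : (u a ⊔ u b) i = (u a i || u b i) := by simp [Pi.sup_apply]
    have h2 : (u a ⊓ u b) i = (u a i && u b i) := by simp [Pi.inf_apply]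
    rw [h1, h2, ha, hb]
    have hab' : (a : ℕ) < (b : ℕ) := hab
    simp
    omega
  exact Finset.sum_lt_sum (fun j _ => key j) ⟨i, Finset.mem_univ i, strict⟩

lemma prod_cmp (ψ : (ι → Bool) → ℝ≥0)
    (hψ : ∀ v w : ι → Bool, ψ v * ψ w ≤ ψ (v ⊓ w) * ψ (v ⊔ w))
    (u : Fin k → ι → Bool) {a b : Fin k} (hab : a ≠ b) :
    ∏ c, ψ (u c) ≤ ∏ c, ψ (cmp u a b c) := by
  rw [prod_pair_rest (fun c => ψ (u c)) hab,
      prod_pair_rest (fun c => ψ (cmp u a b c)) hab]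
  have hrest : ∏ c ∈ (Finset.univ.erase b).erase a, ψ (cmp u a b c)
      = ∏ c ∈ (Finset.univ.erase b).erase a, ψ (u c) := by
    refine Finset.prod_congr rfl fun c hc => ?_
    simp only [Finset.mem_erase] at hc
    rw [cmp_other u hc.1 hc.2.1]
  rw [hrest, cmp_a u hab, cmp_b u]
  exact mul_le_mul_left (by rw [mul_comm (ψ (u a ⊔ u b))]; exact hψ (u a) (u b)) _


lemma prod_le_prod_srt (ψ : (ι → Bool) → ℝ≥0)
    (hψ : ∀ v w : ι → Bool, ψ v * ψ w ≤ ψ (v ⊓ w) * ψ (v ⊔ w)) :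
    ∀ (N : ℕ) (u : Fin k → ι → Bool), pot u ≤ N →
      ∏ a, ψ (u a) ≤ ∏ a, ψ (srt u a) := by
  intro N
  induction N with
  | zero =>
    intro u hu
    by_cases hs : ∀ i (a b : Fin k), a < b → u b i = true → u a i = true
    · rw [← srt_eq_of_sorted u hs]
    · push_neg at hs
      obtain ⟨i, a, b, hab, hb, ha⟩ := hs
      have ha' : u a i = false := by simpa using ha
      exact absurd (pot_cmp u hab ha' hb) (by omega)
  | succ N ih =>
    intro u hu
    by_cases hs : ∀ i (a b : Fin k), a < b → u b i = true → u a i = true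
    · rw [← srt_eq_of_sorted u hs]
    · push_neg at hs
      obtain ⟨i, a, b, hab, hb, ha⟩ := hs
      have ha' : u a i = false := by simpa using ha
      have hpot : pot (cmp u a b) ≤ N := by
        have := pot_cmp u hab ha' hb; omega
      calc ∏ a, ψ (u a) ≤ ∏ c, ψ (cmp u a b c) := prod_cmp ψ hψ u hab.ne
      _ ≤ ∏ c, ψ (srt (cmp u a b) c) := ih (cmp u a b) hpot
      _ = ∏ c, ψ (srt u c) := by rw [srt_cmp u hab.ne]

/-- product over a boolean tuple depends only on the count of trues -/
lemma prod_bool_count (g : Bool → ℝ≥0) (v w : Fin k → Bool)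
    (h : (∑ a, if v a then 1 else 0) = (∑ a : Fin k, if w a then 1 else 0)) :
    ∏ a, g (v a) = ∏ a, g (w a) := by
  have key : ∀ v : Fin k → Bool, ∏ a, g (v a)
      = g true ^ (∑ a, if v a then 1 else 0) * g false ^ (k - ∑ a, if v a then (1:ℕ) else 0) := by
    intro v
    have h1 : ∀ a : Fin k, g (v a) = if v a then g true else g false := by
      intro a; cases v a <;> simp
    rw [Finset.prod_congr rfl (fun a _ => h1 a), Finset.prod_ite, Finset.prod_const,
      Finset.prod_const]
    have hc : (Finset.univ.filter fun a => v a = true).card = ∑ a, if v a then 1 else 0 := by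
      rw [Finset.sum_boole]; simp
    have hc2 : (Finset.univ.filter fun a => ¬ v a = true).card
        = k - ∑ a, if v a then (1:ℕ) else 0 := by
      have := Finset.card_filter_add_card_filter_not
        (s := (Finset.univ : Finset (Fin k))) (p := fun a => v a = true)
      simp only [Finset.card_univ, Fintype.card_fin] at this
      omega
    rw [hc, hc2]
  rw [key v, key w, h]

end CoverMaxAux

open CoverMaxAux

/-- The max-product analogue: if `f^G` admits a log-supermodular factorization over
`G = (V, 𝒜)` and `f^H` is the function associated to a permutation-encoded `k`-cover `H`
of `G`, then `max f^H ≤ (max f^G)ᵏ`. -/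
theorem cover_max_le {n k : ℕ} (hk : 1 ≤ k)
    (𝒜 : Finset (Finset (Fin n)))
    (h𝒜 : ∀ α ∈ 𝒜, α.Nonempty)
    (φ : Fin n → Bool → ℝ≥0)
    (ψ : (α : Finset (Fin n)) → ({ i // i ∈ α } → Bool) → ℝ≥0)
    (hψ : ∀ α ∈ 𝒜, ∀ u v : { i // i ∈ α } → Bool,
      ψ α u * ψ α v ≤ ψ α (u ⊓ v) * ψ α (u ⊔ v))
    (fG : (Fin n → Bool) → ℝ≥0)
    (hfG : ∀ x : Fin n → Bool,
      fG x = (∏ i : Fin n, φ i (x i)) * ∏ α ∈ 𝒜, ψ α (fun i => x i.val))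
    -- the `k`-cover is encoded by a permutation `σ α i` of `{1,…,k}` for each `α ∈ 𝒜`, `i ∈ α`
    (σ : (α : Finset (Fin n)) → { i // i ∈ α } → Equiv.Perm (Fin k))
    (fH : (Fin k → Fin n → Bool) → ℝ≥0)
    (hfH : ∀ x : Fin k → Fin n → Bool,
      fH x = (∏ i : Fin n, ∏ a : Fin k, φ i (x a i)) *
        ∏ α ∈ 𝒜, ∏ a : Fin k, ψ α (fun i => x (σ α i a) i.val)) :
    (Finset.univ : Finset (Fin k → Fin n → Bool)).sup fH ≤
      ((Finset.univ : Finset (Fin n → Bool)).sup fG) ^ k := by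
  refine Finset.sup_le fun x _ => ?_
  set y : Fin k → Fin n → Bool := srt x with hy
  -- φ part
  have hφ : ∀ i : Fin n, ∏ a : Fin k, φ i (x a i) = ∏ a : Fin k, φ i (y a i) := by
    intro i
    refine prod_bool_count (φ i) _ _ ?_
    have h1 : (∑ a : Fin k, if y a i then 1 else 0)
        = ∑ a : Fin k, if (a : ℕ) < cnt x i then 1 else 0 := by
      refine Finset.sum_congr rfl fun a _ => ?_
      simp [hy, srt]
    rw [h1, count_lt (cnt_le x i)]
    rfl
  -- ψ part
  have hψ' : ∀ α ∈ 𝒜, ∏ a : Fin k, ψ α (fun i => x (σ α i a) i.val)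
      ≤ ∏ a : Fin k, ψ α (fun i => y a i.val) := by
    intro α hα
    set u : Fin k → { i // i ∈ α } → Bool := fun a i => x (σ α i a) i.val with hu
    have hcnt : ∀ i : { i // i ∈ α }, cnt u i = cnt x i.val := by
      intro i
      unfold cnt
      exact Equiv.sum_comp (σ α i) (fun b => if x b i.val then 1 else 0)
    have hsrt : srt u = fun a i => y a i.val := by
      funext a i
      rw [srt, hcnt i]
      rfl
    calc ∏ a : Fin k, ψ α (u a) ≤ ∏ a : Fin k, ψ α (srt u a) :=
          prod_le_prod_srt (ψ α) (hψ α hα) (pot u) u le_rfl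
    _ = ∏ a : Fin k, ψ α (fun i => y a i.val) := by rw [hsrt]
  have step1 : fH x ≤ ∏ a : Fin k, fG (y a) := by
    rw [hfH x]
    have hG : ∏ a : Fin k, fG (y a)
        = (∏ i : Fin n, ∏ a : Fin k, φ i (y a i)) *
          ∏ α ∈ 𝒜, ∏ a : Fin k, ψ α (fun i => y a i.val) := by
      simp only [hfG]
      rw [Finset.prod_mul_distrib, Finset.prod_comm, Finset.prod_comm (s := Finset.univ) (t := 𝒜)]
    rw [hG]
    refine mul_le_mul' ?_ ?_
    · exact le_of_eq (Finset.prod_congr rfl fun i _ => hφ i)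
    · exact Finset.prod_le_prod' fun α hα => hψ' α hα
  calc fH x ≤ ∏ a : Fin k, fG (y a) := step1
  _ ≤ ∏ _a : Fin k, (Finset.univ : Finset (Fin n → Bool)).sup fG :=
      Finset.prod_le_prod' fun a _ => Finset.le_sup (Finset.mem_univ (y a))
  _ = ((Finset.univ : Finset (Fin n → Bool)).sup fG) ^ k := by
      rw [Finset.prod_const, Finset.card_univ, Fintype.card_fin]
end
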